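/- Let x, b ∈ ℝ³ with 0 < |b − x| < 2, set s = |b − x|/2, and let a ∈ ℝ³ satisfy |a − (b + x)/2| = √(1 − s²) and (a − (b + x)/2)·(b − x) = 0. Define the curve γ(t) = (b + x)/2 + cos(t)·(a − (b + x)/2) + sin(t)·((b − x)/|b − x|) × (a − (b + x)/2) for t ∈ ℝ, and define ν(t) = (γ'(t)/|γ'(t)|) × (γ(t) − x). Then for every ψ ≥ 0, ∫₀^ψ ν(t)·|γ'(t)| dt = −s·((b − x)/|b − x|) × (γ(ψ) − a) − ψ·((1 − s²)/s)·(b − x)/2. -/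

import Mathlib

open Real MeasureTheory

/-- The cross product on `EuclideanSpace ℝ (Fin 3)`. -/
noncomputable def cross3 (u v : EuclideanSpace ℝ (Fin 3)) : EuclideanSpace ℝ (Fin 3) :=
  (EuclideanSpace.equiv (Fin 3) ℝ).symm
    (crossProduct (EuclideanSpace.equiv (Fin 3) ℝ u) (EuclideanSpace.equiv (Fin 3) ℝ v))

/-!
Since `‖γ'‖ • ν = γ' × (γ - x)`, the integrand is `γ' × (m - x) + γ' × (γ - m)` with
`m = (b + x) / 2`. The first term is the derivative of `γ × (m - x)` because `m - x = s u` is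
constant; the second is constant, `-(w × v)`, as for any uniformly parametrised ellipse
`m + cos t • w + sin t • v`. With `w = a - m ⊥ u`, `v = u × w` and `‖w‖² = 1 - s²` we get
`w × v = (1 - s²) u`, and the fundamental theorem of calculus gives the formula.
-/

local notation "E³" => EuclideanSpace ℝ (Fin 3)

section Cross3

variable (p q r : E³) (c : ℝ)

@[simp] lemma cross3_add_left : cross3 (p + q) r = cross3 p r + cross3 q r := by
  simp [cross3]

@[simp] lemma cross3_add_right : cross3 p (q + r) = cross3 p q + cross3 p r := by
  simp [cross3]

@[simp] lemma cross3_smul_left : cross3 (c • p) q = c • cross3 p q := by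
  simp [cross3]

@[simp] lemma cross3_smul_right : cross3 p (c • q) = c • cross3 p q := by
  simp [cross3]

@[simp] lemma cross3_self : cross3 p p = 0 := by
  simp [cross3]

lemma cross3_anticomm : - cross3 p q = cross3 q p := by
  rw [cross3, cross3, ← cross_anticomm, map_neg, neg_neg]

lemma cross3_cross3 : cross3 p (cross3 q p) = ‖p‖ ^ 2 • q - inner ℝ q p • p := by
  rw [← real_inner_self_eq_norm_sq]
  simp only [cross3, ContinuousLinearEquiv.apply_symm_apply, cross_cross_eq_smul_sub_smul',
    EuclideanSpace.inner_eq_star_dotProduct, map_sub, map_smul,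
    ContinuousLinearEquiv.symm_apply_apply, star_trivial]
  congr 2
  exact dotProduct_comm _ _

end Cross3

lemma norm_smul_cross3_inv_norm_smul (y z : E³) : ‖y‖ • cross3 (‖y‖⁻¹ • y) z = cross3 y z := by
  rw [cross3_smul_left, smul_smul]
  rcases eq_or_ne y 0 with rfl | hy
  · simp [cross3]
  · rw [mul_inv_cancel₀ (norm_ne_zero_iff.2 hy), one_smul]

lemma hasDerivAt_ellipse {F : Type*} [NormedAddCommGroup F] [NormedSpace ℝ F] (m w v : F)
    (t : ℝ) : HasDerivAt (fun t => m + cos t • w + sin t • v) (-sin t • w + cos t • v) t := by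
  simpa using (((hasDerivAt_const t m).fun_add ((hasDerivAt_cos t).smul_const w)).fun_add
    ((hasDerivAt_sin t).smul_const v))

lemma cross3_ellipse_deriv (w v : E³) (t : ℝ) :
    cross3 (-sin t • w + cos t • v) (cos t • w + sin t • v) = -cross3 w v := by
  simp only [cross3_add_left, cross3_add_right, cross3_smul_left, cross3_smul_right, cross3_self,
    smul_zero, ← cross3_anticomm w v]
  linear_combination (norm := module) (-(sin_sq_add_cos_sq t)) • cross3 w v

lemma integral_cross3_deriv_ellipse (m w v x : E³) (ψ : ℝ) :
    ∫ t in 0..ψ, cross3 (-sin t • w + cos t • v) (m + cos t • w + sin t • v - x)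
      = cross3 ((cos ψ - 1) • w + sin ψ • v) (m - x) - ψ • cross3 w v := by
  set c := m - x
  have hintegrand : ∀ t, cross3 (-sin t • w + cos t • v) (m + cos t • w + sin t • v - x)
      = (-sin t • cross3 w c + cos t • cross3 v c) - cross3 w v := by
    intro t
    rw [show m + cos t • w + sin t • v - x = c + (cos t • w + sin t • v) by module,
      cross3_add_right, cross3_ellipse_deriv]
    simp only [cross3_add_left, cross3_smul_left]
    abel
  have hF : ∀ t, HasDerivAt
      (fun t => (cross3 m c + cos t • cross3 w c + sin t • cross3 v c) - t • cross3 w v)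
      ((-sin t • cross3 w c + cos t • cross3 v c) - cross3 w v) t := fun t => by
    simpa using (hasDerivAt_ellipse (cross3 m c) (cross3 w c) (cross3 v c) t).fun_sub
      ((hasDerivAt_id' t).smul_const (cross3 w v))
  simp only [hintegrand]
  rw [intervalIntegral.integral_eq_sub_of_hasDerivAt (fun t _ => hF t)
    (by apply Continuous.intervalIntegrable; fun_prop)]
  simp only [cross3_add_left, cross3_smul_left, cos_zero, sin_zero]
  module

theorem stmt_9_general (x b : EuclideanSpace ℝ (Fin 3)) (h0 : 0 < ‖b - x‖) (h2 : ‖b - x‖ < 2)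
    (s : ℝ) (hs : s = ‖b - x‖ / 2)
    (a : EuclideanSpace ℝ (Fin 3))
    (ha1 : ‖a - ((1 : ℝ) / 2) • (b + x)‖ = Real.sqrt (1 - s ^ 2))
    (ha2 : (inner ℝ (a - ((1 : ℝ) / 2) • (b + x)) (b - x) : ℝ) = 0)
    (γ : ℝ → EuclideanSpace ℝ (Fin 3))
    (hγ : ∀ t : ℝ, γ t = ((1 : ℝ) / 2) • (b + x)
        + Real.cos t • (a - ((1 : ℝ) / 2) • (b + x))
        + Real.sin t • cross3 (‖b - x‖⁻¹ • (b - x)) (a - ((1 : ℝ) / 2) • (b + x)))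
    (ν : ℝ → EuclideanSpace ℝ (Fin 3))
    (hν : ∀ t : ℝ, ν t = cross3 (‖deriv γ t‖⁻¹ • deriv γ t) (γ t - x))
    (ψ : ℝ) :
    (∫ t in (0:ℝ)..ψ, ‖deriv γ t‖ • ν t) =
      (-s) • cross3 (‖b - x‖⁻¹ • (b - x)) (γ ψ - a)
        - (ψ * ((1 - s ^ 2) / s)) • (((1 : ℝ) / 2) • (b - x)) := by
  set m : E³ := ((1 : ℝ) / 2) • (b + x)
  set w : E³ := a - m
  set u : E³ := ‖b - x‖⁻¹ • (b - x)
  have hs0 : s ≠ 0 := by rw [hs]; positivity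
  have hsu : ((1 : ℝ) / 2) • (b - x) = s • u := by
    rw [smul_smul, hs]; field_simp
  have hmx : m - x = s • u := by rw [← hsu]; module
  have hwuw : cross3 w (cross3 u w) = (1 - s ^ 2) • u := by
    have huw : inner ℝ u w = 0 := by rw [real_inner_smul_left, real_inner_comm, ha2, mul_zero]
    rw [cross3_cross3, ha1, sq_sqrt (by nlinarith), huw, zero_smul, sub_zero]
  have hderiv : ∀ t, deriv γ t = -sin t • w + cos t • cross3 u w := fun t => by
    rw [funext hγ]; exact (hasDerivAt_ellipse m w _ t).deriv
  calc (∫ t in (0:ℝ)..ψ, ‖deriv γ t‖ • ν t)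
      = ∫ t in (0:ℝ)..ψ, cross3 (-sin t • w + cos t • cross3 u w)
          (m + cos t • w + sin t • cross3 u w - x) := by
        simp only [hν, norm_smul_cross3_inv_norm_smul, hderiv, hγ]
    _ = cross3 ((cos ψ - 1) • w + sin ψ • cross3 u w) (m - x) - ψ • cross3 w (cross3 u w) :=
        integral_cross3_deriv_ellipse _ _ _ _ _
    _ = _ := by
        have hγa : γ ψ - a = (cos ψ - 1) • w + sin ψ • cross3 u w := by rw [hγ]; module
        rw [hmx, hwuw, hγa, hsu, ← cross3_anticomm, cross3_smul_left]
        match_scalars <;> field_simp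

/-- The key integral of the outward conormal along an edge of a Reuleaux polyhedron. -/
theorem stmt_9 (x b : EuclideanSpace ℝ (Fin 3)) (h0 : 0 < ‖b - x‖) (h2 : ‖b - x‖ < 2)
    (s : ℝ) (hs : s = ‖b - x‖ / 2)
    (a : EuclideanSpace ℝ (Fin 3))
    (ha1 : ‖a - ((1 : ℝ) / 2) • (b + x)‖ = Real.sqrt (1 - s ^ 2))
    (ha2 : (inner ℝ (a - ((1 : ℝ) / 2) • (b + x)) (b - x) : ℝ) = 0)
    (γ : ℝ → EuclideanSpace ℝ (Fin 3))
    (hγ : ∀ t : ℝ, γ t = ((1 : ℝ) / 2) • (b + x)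
        + Real.cos t • (a - ((1 : ℝ) / 2) • (b + x))
        + Real.sin t • cross3 (‖b - x‖⁻¹ • (b - x)) (a - ((1 : ℝ) / 2) • (b + x)))
    (ν : ℝ → EuclideanSpace ℝ (Fin 3))
    (hν : ∀ t : ℝ, ν t = cross3 (‖deriv γ t‖⁻¹ • deriv γ t) (γ t - x))
    (ψ : ℝ) (hψ : 0 ≤ ψ) :
    (∫ t in (0:ℝ)..ψ, ‖deriv γ t‖ • ν t) =
      (-s) • cross3 (‖b - x‖⁻¹ • (b - x)) (γ ψ - a)
        - (ψ * ((1 - s ^ 2) / s)) • (((1 : ℝ) / 2) • (b - x)) :=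
  stmt_9_general x b h0 h2 s hs a ha1 ha2 γ hγ ν hν ψ
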